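/- Triangle Poincaré estimate: for every M ≥ 0 there exists a function C₁ : (0,∞) → (0,∞) with C₁(β) → 1 as β ↓ 0 such that the following holds. Let N ≥ 3 and let E_N : S_N → ℝ satisfy ‖∇_a E_N‖_∞ ≤ M for all a ∈ B_N. Then for every β > 0, every triangle T ∈ 𝒯_N with vertex set T̃ = ∪_{a∈T} a, every f : S_N → ℝ, and every σ ∈ S_N, (N/3) Σ_{a,b∈T} π_N^β[ c_a c_b ∇_a f ∇_b f | σ(z) : z ∉ T̃ ](σ) ≥ (C₁(β)/2) Σ_{a∈T} π_N^β[ c_a (∇_a f)² | σ(z) : z ∉ T̃ ](σ). -/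

import Mathlib

open Finset Filter Topology
open scoped BigOperators

attribute [local instance] Classical.propDecidable

namespace PermGibbs

/-- The symmetric group on `{1, …, N}`. -/
abbrev SN (N : ℕ) := Equiv.Perm (Fin N)

/-- `σ^a` for `a = {x,y}`: compose `σ` with the transposition exchanging `x` and `y`. -/
def pexch {N : ℕ} (σ : SN N) (x y : Fin N) : SN N := σ * Equiv.swap x y

/-- The gradient `∇_a f` for `a = {x,y}`. -/
def pgrad {N : ℕ} (f : SN N → ℝ) (x y : Fin N) (σ : SN N) : ℝ := f (pexch σ x y) - f σ

/-- Partition function of the Gibbs measure on `S_N`. -/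
noncomputable def pZ (N : ℕ) (β : ℝ) (E : SN N → ℝ) : ℝ :=
  ∑ σ : SN N, Real.exp (-(β * E σ))

/-- The Gibbs probability `π_N^β`. -/
noncomputable def ppi (N : ℕ) (β : ℝ) (E : SN N → ℝ) (σ : SN N) : ℝ :=
  Real.exp (-(β * E σ)) / pZ N β E

/-- Expectation with respect to `π_N^β`. -/
noncomputable def pexpect (N : ℕ) (β : ℝ) (E : SN N → ℝ) (g : SN N → ℝ) : ℝ :=
  ∑ σ : SN N, ppi N β E σ * g σ

/-- Variance with respect to `π_N^β`. -/
noncomputable def pvar (N : ℕ) (β : ℝ) (E : SN N → ℝ) (f : SN N → ℝ) : ℝ :=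
  pexpect N β E (fun σ => (f σ - pexpect N β E f) ^ 2)

/-- The rates `c_a = (1/N) exp(−(β/2) ∇_a E_N)` for `a = {x,y}`. -/
noncomputable def prate {N : ℕ} (β : ℝ) (E : SN N → ℝ) (x y : Fin N) (σ : SN N) : ℝ :=
  (1 / (N : ℝ)) * Real.exp (-(β / 2) * (E (pexch σ x y) - E σ))

/-- Dirichlet form of the generator `𝒢_N^β` (the sum over unordered pairs is
written as half the sum over ordered distinct pairs). -/
noncomputable def pDir (N : ℕ) (β : ℝ) (E : SN N → ℝ) (f : SN N → ℝ) : ℝ :=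
  (1 / 2) * ((1 / 2) * ∑ x : Fin N, ∑ y : Fin N,
    if x ≠ y then pexpect N β E (fun σ => prate β E x y σ * (pgrad f x y σ) ^ 2) else 0)

/-- The three edges of the triangle on the vertices `u, v, w`. -/
def edges {N : ℕ} (u v w : Fin N) : Fin 3 → Fin N × Fin N := ![(u, v), (v, w), (u, w)]

/-- Conditional expectation of `g` under `π_N^β` given the values of the permutation
outside the vertex set `Tv`: the Gibbs-weighted average of `g` over the permutations
agreeing with `σ` off `Tv`. -/
noncomputable def condExp {N : ℕ} (β : ℝ) (E : SN N → ℝ) (Tv : Finset (Fin N))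
    (g : SN N → ℝ) (σ : SN N) : ℝ :=
  (∑ σ' ∈ Finset.univ.filter (fun σ' : SN N => ∀ z ∉ Tv, σ' z = σ z),
      Real.exp (-(β * E σ')) * g σ') /
    ∑ σ' ∈ Finset.univ.filter (fun σ' : SN N => ∀ z ∉ Tv, σ' z = σ z),
      Real.exp (-(β * E σ'))

end PermGibbs

/-!
Conditionally on `σ` off `{u, v, w}`, the Gibbs measure lives on the six permutations `σ g` with
`g ∈ S₃` acting on `u, v, w`, and with `ψ = exp (-β E / 2)` one has
`exp (-β E τ) c_a(τ) = ψ(τ) ψ(τ^a) / N`. The three transpositions of the triangle join every even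
`g` to every odd `g` exactly once, so after clearing the common normalisation both sides are sums
over the complete bipartite graph `K₃,₃` with vertex weights `ψ`. On a complete bipartite graph
the weighted variance decomposition `P Q S = P X + Q Y - D²` bounds the edge energy `S` by the
squared neighbour sums `X`, `Y`, losing only the ratio of the extreme weights. On a fibre this
ratio is at most `exp (2 β M)`, since its energies are within `2 M` of `E σ`; hence
`C₁(β) = exp (-2 β M)`.
-/

open Equiv

section Bipartite

variable {ι : Type*} (s t : Finset ι) (p a : ι → ℝ)

theorem sum_mul_sub_mul_sq (x y : ℝ) :
    ∑ i ∈ s, p i * (x - y * a i) ^ 2 =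
      x ^ 2 * ∑ i ∈ s, p i - 2 * x * y * ∑ i ∈ s, p i * a i + y ^ 2 * ∑ i ∈ s, p i * a i ^ 2 := by
  simp only [mul_sum, ← sum_sub_distrib, ← sum_add_distrib]
  exact sum_congr rfl fun i _ => by ring

theorem sum_mul_sub_const (c : ℝ) :
    ∑ i ∈ s, p i * (a i - c) = ∑ i ∈ s, p i * a i - (∑ i ∈ s, p i) * c := by
  simp only [mul_sub, sum_sub_distrib, sum_mul]

/-- The subtracted square is `(P Q (b̄ - ā))²`, where `P`, `Q` are the masses and `ā`, `b̄` the
`p`-weighted means of `a` on `s` and `t`. -/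
theorem bipartite_variance_identity :
    (∑ i ∈ s, p i) * (∑ j ∈ t, p j) * ∑ i ∈ s, ∑ j ∈ t, p i * p j * (a j - a i) ^ 2 =
      (∑ i ∈ s, p i) * ∑ i ∈ s, p i * (∑ j ∈ t, p j * (a j - a i)) ^ 2 +
      (∑ j ∈ t, p j) * ∑ j ∈ t, p j * (∑ i ∈ s, p i * (a i - a j)) ^ 2 -
      ((∑ i ∈ s, p i) * ∑ j ∈ t, p j * a j - (∑ j ∈ t, p j) * ∑ i ∈ s, p i * a i) ^ 2 := by
  have hS : ∑ i ∈ s, ∑ j ∈ t, p i * p j * (a j - a i) ^ 2 =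
      (∑ i ∈ s, p i) * ∑ j ∈ t, p j * a j ^ 2 - 2 * (∑ j ∈ t, p j * a j) * ∑ i ∈ s, p i * a i +
        (∑ j ∈ t, p j) * ∑ i ∈ s, p i * a i ^ 2 := by
    have inner : ∀ i, ∑ j ∈ t, p i * p j * (a j - a i) ^ 2 =
        p i * ∑ j ∈ t, p j * a j ^ 2 - 2 * (∑ j ∈ t, p j * a j) * (p i * a i) +
          (∑ j ∈ t, p j) * (p i * a i ^ 2) := by
      intro i
      simp only [mul_sum, sum_mul, ← sum_sub_distrib, ← sum_add_distrib]
      exact sum_congr rfl fun j _ => by ring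
    simp only [inner, sum_add_distrib, sum_sub_distrib, ← mul_sum, ← sum_mul]
  simp only [sum_mul_sub_const, hS, sum_mul_sub_mul_sq]
  ring

theorem bipartite_poincare {c m' : ℝ} (hc : 0 < c) (hs : c ≤ ∑ i ∈ s, p i)
    (ht : c ≤ ∑ j ∈ t, p j) (hps : ∀ i ∈ s, p i ≤ m') (hpt : ∀ j ∈ t, p j ≤ m') :
    c * ∑ i ∈ s, ∑ j ∈ t, p i * p j * (a j - a i) ^ 2 ≤
      m' * (∑ i ∈ s, (∑ j ∈ t, p j * (a j - a i)) ^ 2 +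
        ∑ j ∈ t, (∑ i ∈ s, p i * (a i - a j)) ^ 2) := by
  set P := ∑ i ∈ s, p i
  set Q := ∑ j ∈ t, p j
  set A := ∑ i ∈ s, (∑ j ∈ t, p j * (a j - a i)) ^ 2
  set B := ∑ j ∈ t, (∑ i ∈ s, p i * (a i - a j)) ^ 2
  have hP : 0 < P := hc.trans_le hs
  have hQ : 0 < Q := hc.trans_le ht
  have hm' : 0 < m' := by
    have := hs.trans (sum_le_card_nsmul s p m' hps)
    rw [nsmul_eq_mul] at this
    exact pos_of_mul_pos_right (hc.trans_le this) (Nat.cast_nonneg _)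
  have hA : ∑ i ∈ s, p i * (∑ j ∈ t, p j * (a j - a i)) ^ 2 ≤ m' * A := by
    rw [mul_sum]
    exact sum_le_sum fun i hi => mul_le_mul_of_nonneg_right (hps i hi) (sq_nonneg _)
  have hB : ∑ j ∈ t, p j * (∑ i ∈ s, p i * (a i - a j)) ^ 2 ≤ m' * B := by
    rw [mul_sum]
    exact sum_le_sum fun j hj => mul_le_mul_of_nonneg_right (hpt j hj) (sq_nonneg _)
  have hAB : 0 ≤ m' * A ∧ 0 ≤ m' * B :=
    ⟨mul_nonneg hm'.le (sum_nonneg fun _ _ => sq_nonneg _),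
      mul_nonneg hm'.le (sum_nonneg fun _ _ => sq_nonneg _)⟩
  have key : P * Q * ∑ i ∈ s, ∑ j ∈ t, p i * p j * (a j - a i) ^ 2 ≤
      P * (m' * A) + Q * (m' * B) := by
    rw [bipartite_variance_identity]
    linarith [mul_le_mul_of_nonneg_left hA hP.le, mul_le_mul_of_nonneg_left hB hQ.le,
      sq_nonneg (P * ∑ j ∈ t, p j * a j - Q * ∑ i ∈ s, p i * a i)]
  -- `key` divided by `P Q` reads `S ≤ m' A / Q + m' B / P`.
  refine le_of_mul_le_mul_left ?_ (mul_pos hP hQ)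
  linarith [mul_le_mul_of_nonneg_left key hc.le,
    mul_le_mul_of_nonneg_right ht (mul_nonneg hP.le hAB.1),
    mul_le_mul_of_nonneg_right hs (mul_nonneg hQ.le hAB.2)]

end Bipartite

namespace Equiv.Perm

variable {α β : Type*} (ι : α ↪ β)

theorem viaEmbedding_mul (g h : Perm α) :
    (g * h).viaEmbedding ι = g.viaEmbedding ι * h.viaEmbedding ι :=
  map_mul (viaEmbeddingHom ι) g h

theorem viaEmbedding_swap [DecidableEq α] [DecidableEq β] (a b : α) :
    (swap a b).viaEmbedding ι = swap (ι a) (ι b) := by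
  ext x
  by_cases hx : x ∈ Set.range ι
  · obtain ⟨c, rfl⟩ := hx
    rw [viaEmbedding_apply, ι.injective.swap_apply]
  · rw [viaEmbedding_apply_of_notMem _ _ _ hx,
      swap_apply_of_ne_of_ne (fun h => hx ⟨a, h.symm⟩) (fun h => hx ⟨b, h.symm⟩)]

theorem exists_viaEmbedding_eq {h : Perm β} (hh : ∀ x ∉ Set.range ι, h x = x) :
    ∃ g : Perm α, g.viaEmbedding ι = h := by
  have hmem : ∀ x, h x ∈ Set.range ι ↔ x ∈ Set.range ι := by
    intro x
    by_cases hx : x ∈ Set.range ι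
    · refine iff_of_true (by_contra fun hhx => hhx ?_) hx
      rwa [h.injective (hh _ hhx)]
    · rw [hh x hx]
  let e := Equiv.ofInjective ι ι.injective
  refine ⟨e.symm.permCongr (h.subtypePerm hmem), ?_⟩
  ext x
  by_cases hx : x ∈ Set.range ι
  · obtain ⟨c, rfl⟩ := hx
    rw [viaEmbedding_apply, permCongr_apply, symm_symm, Equiv.apply_ofInjective_symm ι.injective,
      subtypePerm_apply]
    rfl
  · rw [viaEmbedding_apply_of_notMem _ _ _ hx, hh x hx]

theorem sum_filter_agree_off_eq_sum_viaEmbedding [Fintype α] [Fintype β] [DecidableEq β]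
    {M : Type*} [AddCommMonoid M] {T : Finset β} (hT : Set.range ι = T) (σ : Perm β)
    (G : Perm β → M) :
    ∑ τ ∈ univ.filter (fun τ : Perm β => ∀ z ∉ T, τ z = σ z), G τ =
      ∑ g : Perm α, G (σ * g.viaEmbedding ι) := by
  symm
  refine sum_bij (fun g _ => σ * g.viaEmbedding ι) ?_ ?_ ?_ fun _ _ => rfl
  · intro g _
    simp only [mem_filter, mem_univ, true_and]
    intro z hz
    rw [mul_apply, viaEmbedding_apply_of_notMem]
    rwa [hT, Finset.mem_coe]
  · intro g _ g' _ hg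
    exact viaEmbeddingHom_injective ι (mul_left_cancel hg)
  · intro τ hτ
    simp only [mem_filter, mem_univ, true_and] at hτ
    obtain ⟨g, hg⟩ := exists_viaEmbedding_eq ι (h := σ⁻¹ * τ) fun x hx => by
      rw [mul_apply, hτ x (by rwa [hT, Finset.mem_coe] at hx), inv_eq_iff_eq]
    exact ⟨g, mem_univ _, by rw [hg, mul_inv_cancel_left]⟩

end Equiv.Perm

namespace PermGibbs

def triSwap (k : Fin 3) : Perm (Fin 3) := swap (edges 0 1 2 k).1 (edges 0 1 2 k).2

def evenPerms : Finset (Perm (Fin 3)) := univ.filter fun g => Perm.sign g = 1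

def oddPerms : Finset (Perm (Fin 3)) := univ.filter fun g => Perm.sign g ≠ 1

theorem card_evenPerms : #evenPerms = 3 := by decide

theorem card_oddPerms : #oddPerms = 3 := by decide

theorem mul_triSwap_injective (g : Perm (Fin 3)) : Function.Injective fun k => g * triSwap k := by
  revert g; decide

theorem image_mul_triSwap_of_mem_evenPerms :
    ∀ g ∈ evenPerms, univ.image (fun k => g * triSwap k) = oddPerms := by decide

theorem image_mul_triSwap_of_mem_oddPerms :
    ∀ g ∈ oddPerms, univ.image (fun k => g * triSwap k) = evenPerms := by decide

theorem exists_eq_triSwap_or_eq_triSwap_mul_triSwap :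
    ∀ g : Perm (Fin 3), ∃ k l, g = triSwap k ∨ g = triSwap k * triSwap l := by decide

/-- The Cayley graph of `S₃` with respect to the transpositions is the complete bipartite graph
between even and odd permutations. -/
theorem sum_apply_sum_mul_triSwap {M : Type*} [AddCommMonoid M] (Ψ : Perm (Fin 3) → ℝ → M)
    (H : Perm (Fin 3) → Perm (Fin 3) → ℝ) :
    ∑ g, Ψ g (∑ k, H g (g * triSwap k)) =
      ∑ g ∈ evenPerms, Ψ g (∑ h ∈ oddPerms, H g h) +
        ∑ g ∈ oddPerms, Ψ g (∑ h ∈ evenPerms, H g h) := by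
  have neighbours : ∀ g t, univ.image (fun k => g * triSwap k) = t →
      ∑ k, H g (g * triSwap k) = ∑ h ∈ t, H g h := by
    rintro g t rfl
    rw [sum_image fun k _ l _ hkl => mul_triSwap_injective g hkl]
  rw [← sum_filter_add_sum_filter_not univ fun g => Perm.sign g = 1]
  exact congrArg₂ (· + ·)
    (sum_congr rfl fun g hg => by rw [neighbours g _ (image_mul_triSwap_of_mem_evenPerms g hg)])
    (sum_congr rfl fun g hg => by rw [neighbours g _ (image_mul_triSwap_of_mem_oddPerms g hg)])

theorem poincare_perm_fin_three {φ F : Perm (Fin 3) → ℝ} {m m' : ℝ} (hm : 0 < m)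
    (hφ : ∀ g, m ≤ φ g ∧ φ g ≤ m') :
    3 * m * ∑ g, ∑ k, φ g * φ (g * triSwap k) * (F (g * triSwap k) - F g) ^ 2 ≤
      2 * m' * ∑ g, (∑ k, φ (g * triSwap k) * (F (g * triSwap k) - F g)) ^ 2 := by
  have hS := sum_apply_sum_mul_triSwap (fun _ x => x) fun g h => φ g * φ h * (F h - F g) ^ 2
  have hA := sum_apply_sum_mul_triSwap (fun _ x => x ^ 2) fun g h => φ h * (F h - F g)
  have hsymm : ∑ g ∈ oddPerms, ∑ h ∈ evenPerms, φ g * φ h * (F h - F g) ^ 2 =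
      ∑ g ∈ evenPerms, ∑ h ∈ oddPerms, φ g * φ h * (F h - F g) ^ 2 := by
    rw [sum_comm]
    exact sum_congr rfl fun _ _ => sum_congr rfl fun _ _ => by ring
  have hmass : ∀ t : Finset (Perm (Fin 3)), #t = 3 → 3 * m ≤ ∑ g ∈ t, φ g := fun t ht => by
    simpa [ht] using card_nsmul_le_sum t φ m fun g _ => (hφ g).1
  have := bipartite_poincare evenPerms oddPerms φ F (by positivity)
    (hmass _ card_evenPerms) (hmass _ card_oddPerms) (fun g _ => (hφ g).2) fun g _ => (hφ g).2
  rw [hS, hA, hsymm]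
  linarith

variable {N : ℕ}

theorem exp_mul_prate_mul (β : ℝ) (E : SN N → ℝ) (x y : Fin N) (τ : SN N) (a : ℝ) :
    Real.exp (-(β * E τ)) * (prate β E x y τ * a) =
      1 / N * (Real.exp (-(β / 2 * E τ)) * Real.exp (-(β / 2 * E (pexch τ x y))) * a) := by
  rw [prate, ← mul_assoc, mul_left_comm, ← Real.exp_add, ← Real.exp_add]
  ring_nf

theorem exp_mul_prate_mul_prate_mul (β : ℝ) (E : SN N → ℝ) (x y x' y' : Fin N) (τ : SN N)
    (a b : ℝ) :
    Real.exp (-(β * E τ)) * (prate β E x y τ * prate β E x' y' τ * a * b) =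
      (1 / N) ^ 2 * (Real.exp (-(β / 2 * E (pexch τ x y))) * a *
        (Real.exp (-(β / 2 * E (pexch τ x' y'))) * b)) := by
  have h : Real.exp (-(β * E τ)) * Real.exp (-(β / 2) * (E (pexch τ x y) - E τ)) *
      Real.exp (-(β / 2) * (E (pexch τ x' y') - E τ)) =
      Real.exp (-(β / 2 * E (pexch τ x y))) * Real.exp (-(β / 2 * E (pexch τ x' y'))) := by
    rw [← Real.exp_add, ← Real.exp_add, ← Real.exp_add]
    ring_nf
  rw [prate, prate]
  linear_combination (1 / (N : ℝ)) ^ 2 * a * b * h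

section Triangle

variable {u v w : Fin N}

def triangleEmb (huv : u ≠ v) (huw : u ≠ w) (hvw : v ≠ w) : Fin 3 ↪ Fin N :=
  ⟨![u, v, w], by
    intro i j hij
    fin_cases i <;> fin_cases j <;> simp_all [eq_comm]⟩

variable (huv : u ≠ v) (huw : u ≠ w) (hvw : v ≠ w)

theorem range_triangleEmb :
    Set.range (triangleEmb huv huw hvw) = ↑({u, v, w} : Finset (Fin N)) := by
  change Set.range ![u, v, w] = _
  simp only [Matrix.range_cons, Matrix.range_empty, Set.union_empty, Set.singleton_union,
    coe_insert, coe_singleton]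

theorem triangleEmb_edges (k : Fin 3) :
    (triangleEmb huv huw hvw (edges 0 1 2 k).1, triangleEmb huv huw hvw (edges 0 1 2 k).2) =
      edges u v w k := by
  fin_cases k <;> rfl

noncomputable def fiberPerm (σ : SN N) (g : Perm (Fin 3)) : SN N :=
  σ * g.viaEmbedding (triangleEmb huv huw hvw)

theorem fiberPerm_one (σ : SN N) : fiberPerm huv huw hvw σ 1 = σ := by
  rw [fiberPerm, ← Perm.viaEmbeddingHom_apply, map_one, mul_one]

theorem pexch_fiberPerm (σ : SN N) (g : Perm (Fin 3)) (k : Fin 3) :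
    pexch (fiberPerm huv huw hvw σ g) (edges u v w k).1 (edges u v w k).2 =
      fiberPerm huv huw hvw σ (g * triSwap k) := by
  rw [fiberPerm, fiberPerm, Perm.viaEmbedding_mul, triSwap, Perm.viaEmbedding_swap,
    ← triangleEmb_edges huv huw hvw k, pexch, mul_assoc]

theorem condExp_eq_sum_fiberPerm (β : ℝ) (E G : SN N → ℝ) (σ : SN N) :
    condExp β E {u, v, w} G σ =
      (∑ g, Real.exp (-(β * E (fiberPerm huv huw hvw σ g))) * G (fiberPerm huv huw hvw σ g)) /
        ∑ g, Real.exp (-(β * E (fiberPerm huv huw hvw σ g))) := by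
  rw [condExp]
  -- `convert` absorbs the differing decidability instances of the two filters.
  congr 1 <;>
    convert Perm.sum_filter_agree_off_eq_sum_viaEmbedding _ (range_triangleEmb huv huw hvw) σ _ <;>
    rfl

theorem abs_energy_fiberPerm_sub_le {E : SN N → ℝ} {M : ℝ}
    (hE : ∀ x y : Fin N, ∀ σ : SN N, |E (pexch σ x y) - E σ| ≤ M) (σ : SN N) (g : Perm (Fin 3)) :
    |E (fiberPerm huv huw hvw σ g) - E σ| ≤ 2 * M := by
  have hM : 0 ≤ M := (abs_nonneg _).trans (hE u v σ)
  have step : ∀ g k,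
      |E (fiberPerm huv huw hvw σ (g * triSwap k)) - E (fiberPerm huv huw hvw σ g)| ≤ M :=
    fun g k => by rw [← pexch_fiberPerm]; exact hE _ _ _
  have first : ∀ k, |E (fiberPerm huv huw hvw σ (triSwap k)) - E σ| ≤ M := fun k => by
    simpa only [one_mul, fiberPerm_one] using step 1 k
  obtain ⟨k, l, rfl | rfl⟩ := exists_eq_triSwap_or_eq_triSwap_mul_triSwap g
  · linarith [first k]
  · calc _ ≤ |E (fiberPerm huv huw hvw σ (triSwap k * triSwap l)) -
            E (fiberPerm huv huw hvw σ (triSwap k))| +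
          |E (fiberPerm huv huw hvw σ (triSwap k)) - E σ| := abs_sub_le _ _ _
      _ ≤ 2 * M := by linarith [step (triSwap k) l, first k]

theorem sum_condExp_rate_mul_sq_grad (β : ℝ) (E f : SN N → ℝ) (σ : SN N) :
    ∑ i : Fin 3, condExp β E {u, v, w}
        (fun τ => prate β E (edges u v w i).1 (edges u v w i).2 τ *
          (pgrad f (edges u v w i).1 (edges u v w i).2 τ) ^ 2) σ =
      1 / N * (∑ g, ∑ k, Real.exp (-(β / 2 * E (fiberPerm huv huw hvw σ g))) *
          Real.exp (-(β / 2 * E (fiberPerm huv huw hvw σ (g * triSwap k)))) *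
          (f (fiberPerm huv huw hvw σ (g * triSwap k)) - f (fiberPerm huv huw hvw σ g)) ^ 2) /
        ∑ g, Real.exp (-(β * E (fiberPerm huv huw hvw σ g))) := by
  simp only [condExp_eq_sum_fiberPerm huv huw hvw, ← sum_div]
  rw [sum_comm, mul_sum]
  refine congrArg (· / _) (sum_congr rfl fun g _ => ?_)
  rw [mul_sum]
  refine sum_congr rfl fun k _ => ?_
  rw [exp_mul_prate_mul, pgrad, pexch_fiberPerm]

theorem sum_sum_condExp_rate_mul_grad (β : ℝ) (E f : SN N → ℝ) (σ : SN N) :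
    ∑ i : Fin 3, ∑ j : Fin 3, condExp β E {u, v, w}
        (fun τ => prate β E (edges u v w i).1 (edges u v w i).2 τ *
          prate β E (edges u v w j).1 (edges u v w j).2 τ *
          pgrad f (edges u v w i).1 (edges u v w i).2 τ *
          pgrad f (edges u v w j).1 (edges u v w j).2 τ) σ =
      (1 / N) ^ 2 * (∑ g, (∑ k, Real.exp (-(β / 2 * E (fiberPerm huv huw hvw σ (g * triSwap k)))) *
          (f (fiberPerm huv huw hvw σ (g * triSwap k)) - f (fiberPerm huv huw hvw σ g))) ^ 2) /
        ∑ g, Real.exp (-(β * E (fiberPerm huv huw hvw σ g))) := by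
  simp only [condExp_eq_sum_fiberPerm huv huw hvw, ← sum_div]
  rw [sum_congr rfl fun i _ => sum_comm, sum_comm, mul_sum]
  refine congrArg (· / _) (sum_congr rfl fun g _ => ?_)
  rw [sq (∑ _, _), sum_mul_sum, mul_sum]
  refine sum_congr rfl fun i _ => ?_
  rw [mul_sum]
  refine sum_congr rfl fun j _ => ?_
  rw [exp_mul_prate_mul_prate_mul, pgrad, pgrad, pexch_fiberPerm, pexch_fiberPerm]

theorem poincare_fiber {E : SN N → ℝ} {M β : ℝ}
    (hE : ∀ x y : Fin N, ∀ σ : SN N, |E (pexch σ x y) - E σ| ≤ M) (hβ : 0 < β)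
    (f : SN N → ℝ) (σ : SN N) :
    3 * Real.exp (-(2 * β * M)) * ∑ g, ∑ k, Real.exp (-(β / 2 * E (fiberPerm huv huw hvw σ g))) *
        Real.exp (-(β / 2 * E (fiberPerm huv huw hvw σ (g * triSwap k)))) *
        (f (fiberPerm huv huw hvw σ (g * triSwap k)) - f (fiberPerm huv huw hvw σ g)) ^ 2 ≤
      2 * ∑ g, (∑ k, Real.exp (-(β / 2 * E (fiberPerm huv huw hvw σ (g * triSwap k)))) *
        (f (fiberPerm huv huw hvw σ (g * triSwap k)) - f (fiberPerm huv huw hvw σ g))) ^ 2 := by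
  have hweight : ∀ g, Real.exp (-(β / 2 * (E σ + 2 * M))) ≤
      Real.exp (-(β / 2 * E (fiberPerm huv huw hvw σ g))) ∧
      Real.exp (-(β / 2 * E (fiberPerm huv huw hvw σ g))) ≤ Real.exp (-(β / 2 * (E σ - 2 * M))) :=
    fun g => by
      have := abs_le.mp (abs_energy_fiberPerm_sub_le huv huw hvw hE σ g)
      constructor <;> refine Real.exp_le_exp.2 ?_ <;> nlinarith
  have hratio : Real.exp (-(β / 2 * (E σ + 2 * M))) =
      Real.exp (-(2 * β * M)) * Real.exp (-(β / 2 * (E σ - 2 * M))) := by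
    rw [← Real.exp_add]; ring_nf
  have hpoinc := poincare_perm_fin_three (F := fun g => f (fiberPerm huv huw hvw σ g))
    (Real.exp_pos _) hweight
  rw [hratio] at hpoinc
  exact le_of_mul_le_mul_right (by linarith) (Real.exp_pos (-(β / 2 * (E σ - 2 * M))))

end Triangle

theorem triangle_poincare_general (M : ℝ) :
    ∃ C₁ : ℝ → ℝ, (∀ β : ℝ, 0 < β → 0 < C₁ β) ∧
      Filter.Tendsto C₁ (nhdsWithin (0 : ℝ) (Set.Ioi 0)) (nhds 1) ∧
      ∀ N : ℕ, 3 ≤ N → ∀ E : SN N → ℝ,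
        (∀ x y : Fin N, ∀ σ : SN N, |E (pexch σ x y) - E σ| ≤ M) →
        ∀ β : ℝ, 0 < β → ∀ u v w : Fin N, u ≠ v → u ≠ w → v ≠ w →
          ∀ f : SN N → ℝ, ∀ σ : SN N,
            (C₁ β / 2) * ∑ i : Fin 3,
                condExp β E {u, v, w}
                  (fun τ => prate β E (edges u v w i).1 (edges u v w i).2 τ *
                    (pgrad f (edges u v w i).1 (edges u v w i).2 τ) ^ 2) σ
              ≤ ((N : ℝ) / 3) * ∑ i : Fin 3, ∑ j : Fin 3,
                  condExp β E {u, v, w}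
                    (fun τ => prate β E (edges u v w i).1 (edges u v w i).2 τ *
                      prate β E (edges u v w j).1 (edges u v w j).2 τ *
                      pgrad f (edges u v w i).1 (edges u v w i).2 τ *
                      pgrad f (edges u v w j).1 (edges u v w j).2 τ) σ := by
  refine ⟨fun β => Real.exp (-(2 * β * M)), fun β _ => Real.exp_pos _, ?_, ?_⟩
  · have hC : Continuous fun β : ℝ => Real.exp (-(2 * β * M)) := by fun_prop
    simpa using (hC.tendsto 0).mono_left nhdsWithin_le_nhds
  intro N hN E hE β hβ u v w huv huw hvw f σ
  dsimp only
  rw [sum_condExp_rate_mul_sq_grad huv huw hvw, sum_sum_condExp_rate_mul_grad huv huw hvw]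
  have key := poincare_fiber huv huw hvw hE hβ f σ
  have hZ : 0 < ∑ g, Real.exp (-(β * E (fiberPerm huv huw hvw σ g))) :=
    sum_pos (fun _ _ => Real.exp_pos _) univ_nonempty
  have hN0 : (0 : ℝ) < N := by exact_mod_cast (show 0 < N by omega)
  generalize (∑ g : Perm (Fin 3), ∑ k : Fin 3, _ : ℝ) = X at key ⊢
  generalize (∑ g : Perm (Fin 3), (∑ k : Fin 3, _ : ℝ) ^ 2) = Y at key ⊢
  generalize ∑ g, Real.exp (-(β * E (fiberPerm huv huw hvw σ g))) = Z at hZ ⊢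
  generalize Real.exp (-(2 * β * M)) = C at key ⊢
  calc C / 2 * (1 / N * X / Z) = 3 * C * X / (6 * N * Z) := by field_simp; ring
    _ ≤ 2 * Y / (6 * N * Z) := by gcongr
    _ = N / 3 * ((1 / N) ^ 2 * Y / Z) := by field_simp; ring

/-- Triangle Poincaré estimate: for every `M ≥ 0` there is a
function `C₁` with `C₁(β) → 1` as `β ↓ 0` such that for every `N ≥ 3`, every energy
with gradients bounded by `M`, every `β > 0`, every triangle `T` (with vertices
`u, v, w`), every `f` and every `σ`,
`(N/3) Σ_{a,b∈T} π[c_a c_b ∇_a f ∇_b f | σ off T̃] ≥ (C₁(β)/2) Σ_{a∈T} π[c_a (∇_a f)² | σ off T̃]`. -/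
theorem triangle_poincare (M : ℝ) (hM : 0 ≤ M) :
    ∃ C₁ : ℝ → ℝ, (∀ β : ℝ, 0 < β → 0 < C₁ β) ∧
      Filter.Tendsto C₁ (nhdsWithin (0 : ℝ) (Set.Ioi 0)) (nhds 1) ∧
      ∀ N : ℕ, 3 ≤ N → ∀ E : SN N → ℝ,
        (∀ x y : Fin N, ∀ σ : SN N, |E (pexch σ x y) - E σ| ≤ M) →
        ∀ β : ℝ, 0 < β → ∀ u v w : Fin N, u ≠ v → u ≠ w → v ≠ w →
          ∀ f : SN N → ℝ, ∀ σ : SN N,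
            (C₁ β / 2) * ∑ i : Fin 3,
                condExp β E {u, v, w}
                  (fun τ => prate β E (edges u v w i).1 (edges u v w i).2 τ *
                    (pgrad f (edges u v w i).1 (edges u v w i).2 τ) ^ 2) σ
              ≤ ((N : ℝ) / 3) * ∑ i : Fin 3, ∑ j : Fin 3,
                  condExp β E {u, v, w}
                    (fun τ => prate β E (edges u v w i).1 (edges u v w i).2 τ *
                      prate β E (edges u v w j).1 (edges u v w j).2 τ *
                      pgrad f (edges u v w i).1 (edges u v w i).2 τ *
                      pgrad f (edges u v w j).1 (edges u v w j).2 τ) σ :=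
  triangle_poincare_general M

end PermGibbs
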